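/- Let λ > 0 and α ∈ [0,1). Then ∫_{ℝ²} |x|^{-2α} e^{U_{λ,α}(x)} dx = 8π(1−α), where the integral is with respect to two-dimensional Lebesgue measure. -/

import Mathlib

open Real MeasureTheory Metric Filter Topology RealInnerProductSpace

noncomputable section

/-- The plane `ℝ²`. -/
abbrev Pl := EuclideanSpace ℝ (Fin 2)

/-- The Laplacian `Δu = ∂²u/∂x₁² + ∂²u/∂x₂²` of a function on `ℝ²`. -/
def lap (u : Pl → ℝ) (x : Pl) : ℝ :=
  ∑ i : Fin 2, fderiv ℝ (fun y => fderiv ℝ u y (EuclideanSpace.single i 1)) x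
    (EuclideanSpace.single i 1)

/-- The radial profile of `U_{λ,α}`. -/
def Uval (lam a r : ℝ) : ℝ :=
  Real.log ((lam * (1 - a)) ^ 2 / (1 + lam ^ 2 / 8 * r ^ (2 * (1 - a))) ^ 2)

/-- `U_{λ,α}(x) = ln( (λ(1−α))² / (1 + (λ²/8)|x|^{2(1−α)})² )`. -/
def U (lam a : ℝ) (x : Pl) : ℝ := Uval lam a ‖x‖

/-!
In polar coordinates the integral becomes `2π λ²(1-α)² ∫₀^∞ r^{p-1} / (1 + c r^p)² dr` with
`p = 2(1-α)` and `c = λ²/8`, and `-1 / (p c (1 + c r^p))` is an antiderivative of the integrand,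
so the radial integral is `1 / (p c)`.
-/

theorem integral_fun_norm_euclideanSpace_fin_two {F : Type*} [NormedAddCommGroup F]
    [NormedSpace ℝ F] (f : ℝ → F) :
    ∫ x : EuclideanSpace ℝ (Fin 2), f ‖x‖ = (2 * π) • ∫ r in Set.Ioi (0 : ℝ), r • f r := by
  rw [integral_fun_norm_addHaar, finrank_euclideanSpace_fin, measureReal_def,
    EuclideanSpace.volume_ball_fin_two]
  simp [pi_pos.le, mul_smul, ← Nat.cast_smul_eq_nsmul ℝ]

theorem integral_rpow_sub_one_div_one_add_mul_rpow_sq {p c : ℝ} (hp : 0 < p) (hc : 0 < c) :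
    ∫ r in Set.Ioi (0 : ℝ), r ^ (p - 1) / (1 + c * r ^ p) ^ 2 = 1 / (p * c) := by
  have hden : ∀ r : ℝ, 0 ≤ r → 0 < 1 + c * r ^ p := fun r hr => by
    have := rpow_nonneg hr p
    positivity
  set g : ℝ → ℝ := fun r => -(1 + c * r ^ p)⁻¹ / (p * c)
  have hderiv : ∀ r ∈ Set.Ioi (0 : ℝ), HasDerivAt g (r ^ (p - 1) / (1 + c * r ^ p) ^ 2) r := by
    intro r (hr : 0 < r)
    have h := ((((hasDerivAt_rpow_const (p := p) (Or.inl hr.ne')).const_mul c).const_add 1).inv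
      (hden r hr.le).ne').neg.div_const (p * c)
    refine h.congr_deriv ?_
    field_simp
  have hcont : ContinuousWithinAt g (Set.Ici 0) 0 := by
    have hbase : ContinuousAt (fun r : ℝ => 1 + c * r ^ p) 0 :=
      (continuousAt_const.mul (continuousAt_rpow_const 0 p (Or.inr hp.le))).const_add 1
    exact ((hbase.inv₀ (hden 0 le_rfl).ne').neg.div_const _).continuousWithinAt
  have hlim : Tendsto g atTop (𝓝 0) := by
    have h := (tendsto_atTop_add_const_left _ 1 ((tendsto_rpow_atTop hp).const_mul_atTop hc))
      |>.inv_tendsto_atTop.neg.div_const (p * c)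
    simpa [g] using h
  have hnonneg : ∀ r ∈ Set.Ioi (0 : ℝ), 0 ≤ r ^ (p - 1) / (1 + c * r ^ p) ^ 2 :=
    fun r (hr : 0 < r) => by have := rpow_pos_of_pos hr (p - 1); positivity
  rw [integral_Ioi_of_hasDerivAt_of_nonneg hcont hderiv hnonneg hlim]
  simp [g, zero_rpow hp.ne']
  ring

theorem exp_Uval {lam a r : ℝ} (hlam : lam ≠ 0) (ha : a < 1) (hr : 0 ≤ r) :
    exp (Uval lam a r) = (lam * (1 - a)) ^ 2 / (1 + lam ^ 2 / 8 * r ^ (2 * (1 - a))) ^ 2 := by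
  have h1a : 1 - a ≠ 0 := by linarith
  have := rpow_nonneg hr (2 * (1 - a))
  rw [Uval, exp_log (by positivity)]

theorem mul_rpow_mul_exp_Uval {lam a r : ℝ} (hlam : lam ≠ 0) (ha : a < 1) (hr : 0 < r) :
    r * (r ^ (-(2 * a)) * exp (Uval lam a r)) =
      (lam * (1 - a)) ^ 2 *
        (r ^ (2 * (1 - a) - 1) / (1 + lam ^ 2 / 8 * r ^ (2 * (1 - a))) ^ 2) := by
  have hpow : r ^ (2 * (1 - a) - 1) = r * r ^ (-(2 * a)) := by
    rw [show 2 * (1 - a) - 1 = 1 + -(2 * a) by ring, rpow_add hr, rpow_one]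
  rw [exp_Uval hlam ha hr.le, hpow]
  ring

/-- The total mass of the bubble `U_{λ,α}` on `ℝ²` is `8π(1−α)`. -/
theorem bubble_total_mass (lam a : ℝ) (hlam : 0 < lam) (ha : a ∈ Set.Ico (0:ℝ) 1) :
    ∫ x : Pl, ‖x‖ ^ (-(2*a)) * Real.exp (U lam a x) = 8 * π * (1 - a) := by
  have h1a : 0 < 1 - a := by linarith [ha.2]
  have hradial : ∫ r in Set.Ioi (0 : ℝ), r * (r ^ (-(2 * a)) * exp (Uval lam a r)) =
      (lam * (1 - a)) ^ 2 * (1 / (2 * (1 - a) * (lam ^ 2 / 8))) := by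
    rw [setIntegral_congr_fun measurableSet_Ioi
        fun r hr => mul_rpow_mul_exp_Uval hlam.ne' ha.2 hr,
      integral_const_mul, integral_rpow_sub_one_div_one_add_mul_rpow_sq (by positivity)
        (by positivity)]
  simp only [U]
  rw [integral_fun_norm_euclideanSpace_fin_two (fun r => r ^ (-(2 * a)) * exp (Uval lam a r))]
  simp only [smul_eq_mul]
  rw [hradial]
  field_simp
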